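/- Let R be the direct limit of a directed system of commutative rings with structural maps ε_j : R_j → R, and let s : Spec(R) → invlim Spec(R_i) be the canonical map q ↦ (ε_i^{-1}(q)). Then for any j ∈ I and a ∈ R_j, the preimage under the projection π_j of the basic open set D(a) ⊆ Spec(R_j) equals the image under s of the basic open set D(ε_j(a)) ⊆ Spec(R). -/

import Mathlib

/-!
A compatible family of primes `(pᵢ)` glues to a prime `P` of the direct limit: membership of
`⟦(i, r)⟧` in `P` is decided by `r ∈ pᵢ`, which is independent of the representative because
`pᵢ = fᵢₖ⁻¹(pₖ)`. Then `εᵢ⁻¹(P) = pᵢ` for all `i`, and `ε_j a ∉ P` exactly when `a ∉ p_j`.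
-/

namespace DirectLimit

variable {ι : Type*} [Preorder ι] [IsDirectedOrder ι] [Nonempty ι] {G : ι → Type*}
  [∀ i, CommRing (G i)] {f : ∀ i j, i ≤ j → G i →+* G j} [DirectedSystem G (f · · ·)]

def ideal (I : ∀ i, Ideal (G i)) (hI : ∀ i j h, (I j).comap (f i j h) = I i) :
    Ideal (DirectLimit G f) where
  carrier := {x | DirectLimit.lift f (fun i r ↦ r ∈ I i) (fun i j h r ↦ by rw [← hI i j h]; rfl) x}
  add_mem' {x y} := by
    induction x, y using DirectLimit.induction₂ with
    | ih i r s => simpa only [Set.mem_ofPred_eq, add_def, lift_def] using add_mem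
  zero_mem' := by
    obtain ⟨i⟩ := ‹Nonempty ι›
    simpa only [Set.mem_ofPred_eq, zero_def i, lift_def] using zero_mem (I i)
  smul_mem' c x := by
    induction c, x using DirectLimit.induction₂ with
    | ih i c r =>
      simpa only [Set.mem_ofPred_eq, smul_eq_mul, mul_def, lift_def] using Ideal.mul_mem_left _ c

variable {I : ∀ i, Ideal (G i)} {hI : ∀ i j h, (I j).comap (f i j h) = I i}

@[simp]
theorem mk_mem_ideal {i : ι} {r : G i} : (⟦⟨i, r⟩⟧ : DirectLimit G f) ∈ ideal I hI ↔ r ∈ I i :=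
  Iff.rfl

instance ideal_isPrime [hprime : ∀ i, (I i).IsPrime] : (ideal I hI).IsPrime where
  ne_top' h := by
    obtain ⟨i⟩ := ‹Nonempty ι›
    have : (⟦⟨i, 1⟩⟧ : DirectLimit G f) ∈ ideal I hI := by rw [← one_def, h]; trivial
    exact (hprime i).ne_top ((Ideal.eq_top_iff_one _).mpr (mk_mem_ideal.mp this))
  mem_or_mem' {x y} := by
    induction x, y using DirectLimit.induction₂ with
    | ih i r s => simpa only [mul_def, mk_mem_ideal] using (hprime i).mem_or_mem

end DirectLimit

namespace Ring.DirectLimit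

variable {ι : Type*} [Preorder ι] {G : ι → Type*} [∀ i, CommRing (G i)]
  {f : ∀ i j, i ≤ j → G i →+* G j}

theorem of_comp_f {i j : ι} (h : i ≤ j) : (of G (f · · ·) j).comp (f i j h) = of G (f · · ·) i :=
  RingHom.ext (of_f h)

variable [IsDirectedOrder ι] [Nonempty ι] [DirectedSystem G (f · · ·)]

/-- Built on the sigma-type model `_root_.DirectLimit`, where elements are classes `⟦⟨i, r⟩⟧`. -/
noncomputable def ideal (I : ∀ i, Ideal (G i)) (hI : ∀ i j h, (I j).comap (f i j h) = I i) :
    Ideal (DirectLimit G (f · · ·)) :=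
  (_root_.DirectLimit.ideal I hI).comap (ringEquiv G f)

variable {I : ∀ i, Ideal (G i)} {hI : ∀ i j h, (I j).comap (f i j h) = I i}

theorem comap_of_ideal (i : ι) : (ideal I hI).comap (of G (f · · ·) i) = I i := by
  ext r
  simp only [ideal, Ideal.mem_comap, ringEquiv_of, _root_.DirectLimit.mk_mem_ideal]

instance ideal_isPrime [∀ i, (I i).IsPrime] : (ideal I hI).IsPrime :=
  Ideal.comap_isPrime _ _

end Ring.DirectLimit

/-- In the inverse limit of the prime spectra of a directed system of commutative rings,
the preimage under the `j`-th projection of the basic open set `D(a)` equals the image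
under the canonical map `s` of the basic open set `D(ε_j a)` of the spectrum of the
direct limit. -/
theorem stmt7 {ι : Type*} [Preorder ι] [IsDirected ι (· ≤ ·)] [Nonempty ι]
    (G : ι → Type*) [∀ i, CommRing (G i)]
    (f' : ∀ i j, i ≤ j → G i →+* G j) [DirectedSystem G fun i j h => f' i j h]
    (j : ι) (a : G j) :
    {p : ∀ i, PrimeSpectrum (G i) |
        (∀ (i k : ι) (h : i ≤ k), PrimeSpectrum.comap (f' i k h) (p k) = p i) ∧
          p j ∈ PrimeSpectrum.basicOpen a} =
      (fun (q : PrimeSpectrum (Ring.DirectLimit G fun i j h => f' i j h)) (i : ι) =>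
          PrimeSpectrum.comap (Ring.DirectLimit.of G (fun i j h => f' i j h) i) q) ''
        (PrimeSpectrum.basicOpen (Ring.DirectLimit.of G (fun i j h => f' i j h) j a) :
          Set (PrimeSpectrum (Ring.DirectLimit G fun i j h => f' i j h))) := by
  ext p
  simp only [Set.mem_ofPred_eq, Set.mem_image, SetLike.mem_coe, PrimeSpectrum.mem_basicOpen]
  constructor
  · rintro ⟨hp, ha⟩
    let P := Ring.DirectLimit.ideal (f := f') (fun i ↦ (p i).asIdeal) fun i k h ↦
      congrArg PrimeSpectrum.asIdeal (hp i k h)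
    have hP (i : ι) : P.comap (Ring.DirectLimit.of G (f' · · ·) i) = (p i).asIdeal :=
      Ring.DirectLimit.comap_of_ideal i
    refine ⟨⟨P, Ring.DirectLimit.ideal_isPrime⟩, ?_, funext fun i ↦ PrimeSpectrum.ext (hP i)⟩
    rwa [← Ideal.mem_comap, hP]
  · rintro ⟨q, hq, rfl⟩
    exact ⟨fun i k h ↦ by rw [← PrimeSpectrum.comap_comp_apply, Ring.DirectLimit.of_comp_f], hq⟩
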